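/- arXiv:2508.15054 — 2 statements merged into one kernel-verified Lean document; each statement's English description precedes it below -/
import Mathlib

section
/- Let μ̃ : ℝ^d → ℝ be a nonnegative, rotationally invariant, rapidly decaying function and A(z) = |z|² I_d - z ⊗ z. Then the convolution satisfies (A * μ̃)(v) = ν̃ A(v) + ((d-1)/d) (∫ |w|² μ̃(w) dw) I_d, where ν̃ = ∫ μ̃ dw. -/
open MeasureTheory

lemma coord_abs_le {d : ℕ} (w : EuclideanSpace ℝ (Fin d)) (j : Fin d) : |w j| ≤ ‖w‖ := by
  have h2 : (w j)^2 ≤ ‖w‖^2 := by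
    rw [EuclideanSpace.norm_eq, Real.sq_sqrt (by positivity)]
    have := Finset.single_le_sum (f := fun m => ‖w m‖^2) (fun m _ => by positivity)
      (Finset.mem_univ j)
    simpa [Real.norm_eq_abs, sq_abs] using this
  calc |w j| = Real.sqrt ((w j)^2) := (Real.sqrt_sq_eq_abs _).symm
    _ ≤ Real.sqrt (‖w‖^2) := Real.sqrt_le_sqrt h2
    _ = ‖w‖ := Real.sqrt_sq (norm_nonneg _)

lemma coord_cont {d : ℕ} (j : Fin d) : Continuous fun w : EuclideanSpace ℝ (Fin d) => w j :=
  (EuclideanSpace.proj j).continuous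

lemma integral_comp_isom {d : ℕ}
    (f : EuclideanSpace ℝ (Fin d) ≃ₗᵢ[ℝ] EuclideanSpace ℝ (Fin d))
    (g : EuclideanSpace ℝ (Fin d) → ℝ) : ∫ w, g (f w) = ∫ w, g w :=
  f.measurePreserving.integral_comp f.toHomeomorph.toMeasurableEquiv.measurableEmbedding g

lemma integ_aux {d : ℕ} (μt : SchwartzMap (EuclideanSpace ℝ (Fin d)) ℝ)
    (g : EuclideanSpace ℝ (Fin d) → ℝ) (hg : Continuous g) (C : ℝ) (k : ℕ)
    (hb : ∀ w, |g w| ≤ C * (1 + ‖w‖ ^ k)) :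
    Integrable (fun w => g w * μt w) := by
  have h1 : Integrable (fun w : EuclideanSpace ℝ (Fin d) =>
      C * ‖μt w‖ + C * (‖w‖ ^ k * ‖μt w‖)) :=
    (μt.integrable.norm.const_mul C).add ((μt.integrable_pow_mul volume k).const_mul C)
  refine h1.mono ((hg.mul μt.continuous).aestronglyMeasurable)
    (Filter.Eventually.of_forall fun w => ?_)
  have h2 : ‖g w * μt w‖ = |g w| * |μt w| := abs_mul _ _
  have h3 : |g w| * |μt w| ≤ (C * (1 + ‖w‖ ^ k)) * |μt w| :=
    mul_le_mul_of_nonneg_right (hb w) (abs_nonneg _)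
  have h4 : (C * (1 + ‖w‖ ^ k)) * |μt w| = C * ‖μt w‖ + C * (‖w‖ ^ k * ‖μt w‖) := by
    rw [Real.norm_eq_abs]; ring
  rw [h2, Real.norm_eq_abs (C * ‖μt w‖ + _)]
  exact le_trans (h3.trans_eq h4) (le_abs_self _)

lemma norm_sq_coords {d : ℕ} (w : EuclideanSpace ℝ (Fin d)) : ‖w‖ ^ 2 = ∑ m, w m * w m := by
  rw [EuclideanSpace.norm_eq, Real.sq_sqrt (by positivity)]
  exact Finset.sum_congr rfl fun m _ => by rw [Real.norm_eq_abs, sq_abs, sq]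

section
variable {d : ℕ} (μt : SchwartzMap (EuclideanSpace ℝ (Fin d)) ℝ)
  (hrad : ∀ v w : EuclideanSpace ℝ (Fin d), ‖v‖ = ‖w‖ → μt v = μt w)

lemma integ_coord (j : Fin d) : Integrable (fun w : EuclideanSpace ℝ (Fin d) => w j * μt w) := by
  refine integ_aux μt _ (coord_cont j) 1 1 (fun w => ?_)
  have h1 := coord_abs_le w j
  have h2 := norm_nonneg w
  simp only [pow_one]
  nlinarith

lemma integ_coord2 (j k : Fin d) :
    Integrable (fun w : EuclideanSpace ℝ (Fin d) => w j * w k * μt w) := by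
  refine integ_aux μt _ ((coord_cont j).mul (coord_cont k)) 1 2 (fun w => ?_)
  have h1 := coord_abs_le w j
  have h2 := coord_abs_le w k
  have h3 := norm_nonneg w
  have h4 : |w j * w k| = |w j| * |w k| := abs_mul _ _
  nlinarith [abs_nonneg (w j), abs_nonneg (w k)]

lemma integ_normsq : Integrable (fun w : EuclideanSpace ℝ (Fin d) => ‖w‖ ^ 2 * μt w) := by
  refine integ_aux μt _ (continuous_norm.pow 2) 1 2 (fun w => ?_)
  have h3 := norm_nonneg w
  rw [abs_of_nonneg (by positivity)]
  nlinarith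

include hrad in
lemma moment_odd (j : Fin d) : ∫ w, w j * μt w = 0 := by
  have h := integral_comp_isom (LinearIsometryEquiv.neg ℝ (E := EuclideanSpace ℝ (Fin d)))
    (fun w => w j * μt w)
  simp only [LinearIsometryEquiv.coe_neg] at h
  have h2 : (fun w : EuclideanSpace ℝ (Fin d) => (-w) j * μt (-w))
      = fun w => -(w j * μt w) := by
    funext w
    rw [hrad (-w) w (by simp), PiLp.neg_apply]
    ring
  rw [h2, integral_neg] at h
  linarith

include hrad in
lemma moment_mixed {j k : Fin d} (hjk : j ≠ k) : ∫ w, w j * w k * μt w = 0 := by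
  classical
  set f := LinearIsometryEquiv.piLpCongrRight (𝕜 := ℝ) 2
    (fun m : Fin d => if m = j then LinearIsometryEquiv.neg ℝ (E := ℝ)
      else LinearIsometryEquiv.refl ℝ ℝ) with hf
  have hfapp : ∀ (w : EuclideanSpace ℝ (Fin d)) (m : Fin d),
      f w m = if m = j then -(w m) else w m := by
    intro w m
    simp only [hf, LinearIsometryEquiv.piLpCongrRight_apply]
    by_cases hm : m = j
    · subst hm; simp
    · simp [hm]
  have h := integral_comp_isom f (fun w => w j * w k * μt w)
  have h2 : (fun w : EuclideanSpace ℝ (Fin d) => f w j * f w k * μt (f w))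
      = fun w => -(w j * w k * μt w) := by
    funext w
    rw [hrad (f w) w (f.norm_map w), hfapp w j, hfapp w k,
      if_pos rfl, if_neg (Ne.symm hjk)]
    ring
  rw [h2, integral_neg] at h
  linarith

include hrad in
lemma moment_sq_eq (j k : Fin d) : ∫ w, w j * w j * μt w = ∫ w, w k * w k * μt w := by
  classical
  set f := LinearIsometryEquiv.piLpCongrLeft 2 ℝ ℝ (Equiv.swap j k) with hf
  have hfapp : ∀ (w : EuclideanSpace ℝ (Fin d)) (m : Fin d),
      f w m = w (Equiv.swap j k m) := by
    intro w m
    simp [hf, LinearIsometryEquiv.piLpCongrLeft_apply, Equiv.piCongrLeft'_apply,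
      Equiv.symm_swap]
  have h := integral_comp_isom f (fun w => w j * w j * μt w)
  have h2 : (fun w : EuclideanSpace ℝ (Fin d) => f w j * f w j * μt (f w))
      = fun w => w k * w k * μt w := by
    funext w
    rw [hrad (f w) w (f.norm_map w), hfapp w j, Equiv.swap_apply_left]
  rw [h2] at h
  exact h.symm

include hrad in
lemma moment_sq_val (j : Fin d) :
    ∫ w, ‖w‖ ^ 2 * μt w = (d : ℝ) * ∫ w, w j * w j * μt w := by
  have e : (fun w : EuclideanSpace ℝ (Fin d) => ‖w‖ ^ 2 * μt w)
      = fun w => ∑ m, w m * w m * μt w := by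
    funext w; rw [norm_sq_coords, Finset.sum_mul]
  rw [e, integral_finset_sum _ (fun m _ => integ_coord2 μt m m)]
  rw [Finset.sum_congr rfl (fun m _ => moment_sq_eq μt hrad m j)]
  simp [Finset.card_univ, nsmul_eq_mul]
end

theorem stmt_8 (d : ℕ) (hd : 2 ≤ d) (μt : SchwartzMap (EuclideanSpace ℝ (Fin d)) ℝ)
    (hpos : ∀ v, 0 ≤ μt v) (hrad : ∀ v w, ‖v‖ = ‖w‖ → μt v = μt w)
    (A : EuclideanSpace ℝ (Fin d) → Fin d → Fin d → ℝ)
    (hA : A = fun z i l => ‖z‖^2 * (if i = l then 1 else 0) - z i * z l)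
    (v : EuclideanSpace ℝ (Fin d)) (i l : Fin d) :
    ∫ w, A (v - w) i l * μt w
      = (∫ w, μt w) * A v i l
        + ((d:ℝ)-1)/d * (∫ w, ‖w‖^2 * μt w) * (if i = l then 1 else 0) := by
  classical
  subst hA
  beta_reduce
  have hd0 : (d : ℝ) ≠ 0 := Nat.cast_ne_zero.mpr (by omega)
  set ν := ∫ w, μt w with hν
  set S := ∫ w, ‖w‖ ^ 2 * μt w with hS
  set δ : ℝ := if i = l then 1 else 0 with hδ
  -- integrability facts
  have hμ : Integrable (fun w : EuclideanSpace ℝ (Fin d) => μt w) := μt.integrable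
  have hIvw : Integrable (fun w : EuclideanSpace ℝ (Fin d) => ‖v - w‖ ^ 2 * μt w) := by
    refine integ_aux μt _ ((continuous_const.sub continuous_id).norm.pow 2)
      ((1 + ‖v‖) ^ 2) 2 (fun w => ?_)
    have h1 : ‖v - w‖ ≤ ‖v‖ + ‖w‖ := norm_sub_le v w
    have h2 := norm_nonneg (v - w)
    have h3 := norm_nonneg v
    have h4 := norm_nonneg w
    rw [abs_of_nonneg (by positivity)]
    nlinarith [sq_nonneg (‖w‖ - 1), sq_nonneg (‖v‖ * ‖w‖), mul_nonneg h3 (sq_nonneg (‖w‖ - 1))]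
  have hIsub : Integrable
      (fun w : EuclideanSpace ℝ (Fin d) => (v i - w i) * (v l - w l) * μt w) := by
    refine integ_aux μt _ ((continuous_const.sub (coord_cont i)).mul
      (continuous_const.sub (coord_cont l))) ((1 + ‖v‖) ^ 2) 2 (fun w => ?_)
    have hvi : |v i - w i| ≤ ‖v‖ + ‖w‖ := by
      calc |v i - w i| ≤ |v i| + |w i| := abs_sub _ _
        _ ≤ ‖v‖ + ‖w‖ := add_le_add (coord_abs_le v i) (coord_abs_le w i)
    have hvl : |v l - w l| ≤ ‖v‖ + ‖w‖ := by
      calc |v l - w l| ≤ |v l| + |w l| := abs_sub _ _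
        _ ≤ ‖v‖ + ‖w‖ := add_le_add (coord_abs_le v l) (coord_abs_le w l)
    have h3 := norm_nonneg v
    have h4 := norm_nonneg w
    have h5 : |(v i - w i) * (v l - w l)| = |v i - w i| * |v l - w l| := abs_mul _ _
    nlinarith [abs_nonneg (v i - w i), abs_nonneg (v l - w l),
      mul_nonneg h3 (sq_nonneg (‖w‖ - 1)), sq_nonneg (‖v‖ * ‖w‖)]
  -- inner product expansion
  have hin : ∀ w : EuclideanSpace ℝ (Fin d), (inner ℝ v w : ℝ) = ∑ j, v j * w j := by
    intro w
    simp [PiLp.inner_apply, RCLike.inner_apply, conj_trivial, mul_comm]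
  -- first integral
  have J1 : ∫ w, ‖v - w‖ ^ 2 * μt w = ‖v‖ ^ 2 * ν + S := by
    have e1 : (fun w : EuclideanSpace ℝ (Fin d) => ‖v - w‖ ^ 2 * μt w)
        = fun w => ‖v‖ ^ 2 * μt w - (∑ j, (2 * v j) * (w j * μt w)) + ‖w‖ ^ 2 * μt w := by
      funext w
      rw [@norm_sub_sq_real, hin w]
      have h5 : (2 * ∑ j, v j * w j) * μt w = ∑ j, (2 * v j) * (w j * μt w) := by
        rw [Finset.mul_sum, Finset.sum_mul]
        exact Finset.sum_congr rfl fun j _ => by ring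
      rw [← h5]; ring
    have hsum : Integrable (fun w : EuclideanSpace ℝ (Fin d) =>
        ∑ j, (2 * v j) * (w j * μt w)) :=
      integrable_finset_sum _ fun j _ => (integ_coord μt j).const_mul _
    have ha : Integrable (fun w : EuclideanSpace ℝ (Fin d) => ‖v‖ ^ 2 * μt w) :=
      hμ.const_mul _
    have hab : Integrable (fun w : EuclideanSpace ℝ (Fin d) =>
        ‖v‖ ^ 2 * μt w - ∑ j, (2 * v j) * (w j * μt w)) := ha.sub hsum
    rw [e1, integral_add hab (integ_normsq μt), integral_sub ha hsum,
      integral_finset_sum _ (fun j _ => (integ_coord μt j).const_mul _)]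
    simp only [integral_const_mul, moment_odd μt hrad, mul_zero, Finset.sum_const_zero,
      sub_zero]
    rfl
  -- mixed second moment
  have hM : ∫ w, w i * w l * μt w = if i = l then S / d else 0 := by
    by_cases h : i = l
    · subst h
      rw [if_pos rfl, eq_div_iff hd0, mul_comm]
      exact (moment_sq_val μt hrad i).symm
    · rw [if_neg h]
      exact moment_mixed μt hrad h
  -- second integral
  have J2 : ∫ w, (v i - w i) * (v l - w l) * μt w
      = v i * v l * ν + (if i = l then S / d else 0) := by
    have e2 : (fun w : EuclideanSpace ℝ (Fin d) => (v i - w i) * (v l - w l) * μt w)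
        = fun w => v i * v l * μt w - v i * (w l * μt w) - v l * (w i * μt w)
          + w i * w l * μt w := by
      funext w; ring
    have ha : Integrable (fun w : EuclideanSpace ℝ (Fin d) => v i * v l * μt w) :=
      hμ.const_mul _
    have hb : Integrable (fun w : EuclideanSpace ℝ (Fin d) => v i * (w l * μt w)) :=
      (integ_coord μt l).const_mul _
    have hc : Integrable (fun w : EuclideanSpace ℝ (Fin d) => v l * (w i * μt w)) :=
      (integ_coord μt i).const_mul _
    have hab : Integrable (fun w : EuclideanSpace ℝ (Fin d) =>
        v i * v l * μt w - v i * (w l * μt w)) := ha.sub hb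
    have habc : Integrable (fun w : EuclideanSpace ℝ (Fin d) =>
        v i * v l * μt w - v i * (w l * μt w) - v l * (w i * μt w)) := hab.sub hc
    rw [e2, integral_add habc (integ_coord2 μt i l), integral_sub hab hc,
      integral_sub ha hb]
    simp only [integral_const_mul, moment_odd μt hrad, mul_zero, sub_zero]
    rw [hM, ← hν]
  -- main computation
  have e0 : (fun w : EuclideanSpace ℝ (Fin d) =>
      (‖v - w‖ ^ 2 * δ - (v - w) i * (v - w) l) * μt w)
      = fun w => δ * (‖v - w‖ ^ 2 * μt w) - (v i - w i) * (v l - w l) * μt w := by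
    funext w
    have hi' : (v - w) i = v i - w i := rfl
    have hl' : (v - w) l = v l - w l := rfl
    rw [hi', hl']; ring
  rw [show (∫ w, (‖v - w‖ ^ 2 * δ - (v - w) i * (v - w) l) * μt w)
      = ∫ w, (δ * (‖v - w‖ ^ 2 * μt w) - (v i - w i) * (v l - w l) * μt w) from by rw [e0],
    integral_sub (hIvw.const_mul δ) hIsub, integral_const_mul, J1, J2]
  by_cases h : i = l
  · simp only [hδ, if_pos h]
    field_simp
    ring
  · simp only [hδ, if_neg h]
    ring
end

section
/- Fix d ≥ 2 and ε > 0, and define for α > 0 the quantity D₁(α) = α^{-d/2} ∫_{ℝ^d} (e^{|z|²/2} - ε) e^{|z|²/2}/(ε + e^{|z|²/2})³ dz + ε α^{-d/2} (1 - α + 2/d) ∫_{ℝ^d} |z|² e^{|z|²}/(ε + e^{|z|²/2})⁴ dz. Then there exist constants C₀, C₁ > 0 (depending only on d and ε) with D₁(α) = C₀ α^{-d/2} - C₁ α^{1-d/2}; in particular, D₁(α) < 0 for all sufficiently large α. -/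
open MeasureTheory Real Set Filter Metric

noncomputable section AuxStmt16

/-- antiderivative of `exp (2s) / (ε + exp s)^4` -/
def hfS16 (ε s : ℝ) : ℝ := -1/(2*(ε + Real.exp s)^2) + ε/(3*(ε + Real.exp s)^3)

def hfS16' (ε s : ℝ) : ℝ := Real.exp s ^ 2 / (ε + Real.exp s)^4

lemma AposS16 {ε : ℝ} (hε : 0 < ε) (s : ℝ) : 0 < ε + Real.exp s := by positivity

lemma hasDerivAt_hfS16 {ε : ℝ} (hε : 0 < ε) (s : ℝ) :
    HasDerivAt (hfS16 ε) (hfS16' ε s) s := by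
  have hA : HasDerivAt (fun s => ε + Real.exp s) (Real.exp s) s :=
    (Real.hasDerivAt_exp s).const_add ε
  have hApos := AposS16 hε s
  have h2 : HasDerivAt (fun s => 2*(ε+Real.exp s)^2)
      (2*((2:ℕ) * (ε+Real.exp s)^(2-1) * Real.exp s)) s := (hA.pow 2).const_mul 2
  have h3 : HasDerivAt (fun s => 3*(ε+Real.exp s)^3)
      (3*((3:ℕ) * (ε+Real.exp s)^(3-1) * Real.exp s)) s := (hA.pow 3).const_mul 3
  have hden2 : 2*(ε+Real.exp s)^2 ≠ 0 := by positivity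
  have hden3 : 3*(ε+Real.exp s)^3 ≠ 0 := by positivity
  have t1 := (hasDerivAt_const s (-1:ℝ)).div h2 hden2
  have t2 := (hasDerivAt_const s ε).div h3 hden3
  have := t1.add t2
  refine HasDerivAt.congr_deriv (f := hfS16 ε) this ?_
  unfold hfS16'
  field_simp
  ring

lemma hfS16_abs_le {ε : ℝ} (hε : 0 < ε) (s : ℝ) : |hfS16 ε s| ≤ Real.exp (-(2*s)) := by
  have hApos := AposS16 hε s
  have hA : Real.exp s ≤ ε + Real.exp s := by linarith
  have he : (0:ℝ) < Real.exp s := Real.exp_pos s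
  have h1 : |hfS16 ε s| ≤ 1/(2*(ε+Real.exp s)^2) + ε/(3*(ε+Real.exp s)^3) := by
    unfold hfS16
    refine (abs_add_le _ _).trans ?_
    rw [abs_div, abs_div]
    gcongr <;> simp [abs_of_nonneg, hε.le, hApos.le, abs_of_pos] <;> positivity
  refine h1.trans ?_
  rw [Real.exp_neg]
  have hE : Real.exp (2*s) = Real.exp s * Real.exp s := by
    rw [← Real.exp_add]; ring_nf
  rw [hE]
  set A := ε + Real.exp s with hAdef
  have hEA : Real.exp s ≤ A := by simp [hAdef]; linarith
  have b1 : 1/(2*A^2) ≤ 1/(2*(Real.exp s * Real.exp s)) := by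
    gcongr
    nlinarith
  have b2 : ε/(3*A^3) ≤ 1/(3*(Real.exp s * Real.exp s)) := by
    rw [div_le_div_iff₀ (by positivity) (by positivity)]
    have hεA : ε ≤ A := by simp [hAdef]; linarith
    have hEE : Real.exp s * Real.exp s ≤ A * A := mul_le_mul hEA hEA he.le hApos.le
    nlinarith [mul_le_mul_of_nonneg_left hEE hε.le]
  have : (Real.exp s * Real.exp s)⁻¹ = 1/(Real.exp s * Real.exp s) := by ring
  rw [this]
  have : 1/(2*(Real.exp s * Real.exp s)) + 1/(3*(Real.exp s * Real.exp s)) ≤ 1/(Real.exp s * Real.exp s) := by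
    rw [div_add_div _ _ (by positivity) (by positivity), div_le_div_iff₀ (by positivity) (by positivity)]
    ring_nf
    nlinarith
  linarith


lemma hfS16'_abs_le {ε : ℝ} (hε : 0 < ε) (s : ℝ) : |hfS16' ε s| ≤ Real.exp (-(2*s)) := by
  have he : (0:ℝ) < Real.exp s := Real.exp_pos s
  have hApos := AposS16 hε s
  unfold hfS16'
  rw [abs_of_nonneg (by positivity), Real.exp_neg]
  have hE : Real.exp (2*s) = Real.exp s ^ 2 := by
    rw [two_mul, Real.exp_add, sq]
  rw [hE, div_le_iff₀ (by positivity), inv_mul_eq_div, le_div_iff₀ (by positivity)]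
  calc Real.exp s ^ 2 * Real.exp s ^ 2 = Real.exp s ^ 4 := by ring
    _ ≤ (ε + Real.exp s)^4 := by gcongr <;> linarith [he.le]

lemma continuous_hfS16 {ε : ℝ} (hε : 0 < ε) : Continuous (hfS16 ε) := by
  unfold hfS16
  fun_prop (disch := intros; positivity)

lemma continuous_hfS16' {ε : ℝ} (hε : 0 < ε) : Continuous (hfS16' ε) := by
  unfold hfS16'
  fun_prop (disch := intros; positivity)


lemma integrableOn_pow_exp_S16 (n : ℕ) :
    IntegrableOn (fun r : ℝ => r ^ n * Real.exp (-(r^2))) (Ioi 0) := by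
  have h := integrable_rpow_mul_exp_neg_mul_sq (b := 1) one_pos
      (s := (n:ℝ)) (lt_of_lt_of_le neg_one_lt_zero (Nat.cast_nonneg n))
  simp only [neg_mul, one_mul] at h
  refine (h.integrableOn).congr_fun (fun x hx => ?_) measurableSet_Ioi
  simp only [Real.rpow_natCast]

lemma integrableOn_pow_hfS16 {ε : ℝ} (hε : 0 < ε) (n : ℕ) :
    IntegrableOn (fun r : ℝ => r ^ n * hfS16 ε (r^2/2)) (Ioi 0) := by
  refine Integrable.mono' (integrableOn_pow_exp_S16 n)
    (((continuous_pow n).mul ((continuous_hfS16 hε).comp (by fun_prop))).aestronglyMeasurable)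
    ((ae_restrict_iff' measurableSet_Ioi).mpr (Filter.Eventually.of_forall fun r hr => ?_))
  have hr0 : (0:ℝ) ≤ r := (le_of_lt hr)
  have hb := hfS16_abs_le hε (r^2/2)
  rw [show -(2*(r^2/2)) = -(r^2) by ring] at hb
  rw [Real.norm_eq_abs, abs_mul, abs_pow, abs_of_nonneg hr0]
  exact mul_le_mul_of_nonneg_left hb (by positivity)

lemma integrableOn_pow_hfS16' {ε : ℝ} (hε : 0 < ε) (n : ℕ) :
    IntegrableOn (fun r : ℝ => r ^ n * hfS16' ε (r^2/2)) (Ioi 0) := by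
  refine Integrable.mono' (integrableOn_pow_exp_S16 n)
    (((continuous_pow n).mul ((continuous_hfS16' hε).comp (by fun_prop))).aestronglyMeasurable)
    ((ae_restrict_iff' measurableSet_Ioi).mpr (Filter.Eventually.of_forall fun r hr => ?_))
  have hr0 : (0:ℝ) ≤ r := (le_of_lt hr)
  have hb := hfS16'_abs_le hε (r^2/2)
  rw [show -(2*(r^2/2)) = -(r^2) by ring] at hb
  rw [Real.norm_eq_abs, abs_mul, abs_pow, abs_of_nonneg hr0]
  exact mul_le_mul_of_nonneg_left hb (by positivity)


lemma ibp_S16 {ε : ℝ} (hε : 0 < ε) {d : ℕ} (hd : 2 ≤ d) :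
    ∫ r in Ioi (0:ℝ), r^(d+1) * hfS16' ε (r^2/2)
      = -(d:ℝ) * ∫ r in Ioi (0:ℝ), r^(d-1) * hfS16 ε (r^2/2) := by
  set G : ℝ → ℝ := fun r => r^d * hfS16 ε (r^2/2) with hG
  set G' : ℝ → ℝ := fun r => (d:ℝ) * (r^(d-1) * hfS16 ε (r^2/2)) + r^(d+1) * hfS16' ε (r^2/2)
    with hG'
  have hderiv : ∀ x ∈ Ici (0:ℝ), HasDerivAt G (G' x) x := by
    intro x _
    have h1 : HasDerivAt (fun r : ℝ => r^2/2) ((2:ℕ)*x^(2-1)/2) x :=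
      (hasDerivAt_pow 2 x).div_const 2
    have h2 := (hasDerivAt_hfS16 hε (x^2/2)).comp x h1
    have h3 := (hasDerivAt_pow d x).mul h2
    refine HasDerivAt.congr_deriv (f := G) h3 ?_
    simp only [hG', Function.comp_apply, Function.comp]
    push_cast
    ring
  have hint : IntegrableOn G' (Ioi 0) :=
    ((integrableOn_pow_hfS16 hε (d-1)).const_mul _).add (integrableOn_pow_hfS16' hε (d+1))
  have htend : Tendsto G atTop (nhds 0) := by
    rw [tendsto_zero_iff_abs_tendsto_zero]
    apply squeeze_zero' (g := fun r => r^d * Real.exp (-r))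
      (Filter.Eventually.of_forall fun r => abs_nonneg _)
    · filter_upwards [eventually_ge_atTop (1:ℝ)] with r hr
      have hr0 : (0:ℝ) ≤ r := by linarith
      have hb := hfS16_abs_le hε (r^2/2)
      rw [show -(2*(r^2/2)) = -(r^2) by ring] at hb
      calc |G r| = r^d * |hfS16 ε (r^2/2)| := by
            rw [hG, abs_mul, abs_pow, abs_of_nonneg hr0]
        _ ≤ r^d * Real.exp (-(r^2)) := mul_le_mul_of_nonneg_left hb (by positivity)
        _ ≤ r^d * Real.exp (-r) := by
            gcongr
            nlinarith
    · exact tendsto_pow_mul_exp_neg_atTop_nhds_zero d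
  have key := integral_Ioi_of_hasDerivAt_of_tendsto' hderiv hint htend
  have hG0 : G 0 = 0 := by
    simp [hG, zero_pow (by omega : d ≠ 0)]
  rw [hG0, sub_zero] at key
  have hsplit : ∫ r in Ioi (0:ℝ), G' r
      = (d:ℝ) * (∫ r in Ioi (0:ℝ), r^(d-1) * hfS16 ε (r^2/2))
        + ∫ r in Ioi (0:ℝ), r^(d+1) * hfS16' ε (r^2/2) := by
    rw [integral_add ((integrableOn_pow_hfS16 hε (d-1)).const_mul _)
      (integrableOn_pow_hfS16' hε (d+1)), integral_const_mul]
  rw [key] at hsplit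
  linarith


lemma integrable_gauss_S16 (d : ℕ) {b : ℝ} (hb : 0 < b) :
    Integrable (fun z : EuclideanSpace ℝ (Fin d) => Real.exp (-b * ‖z‖^2)) := by
  have h := (GaussianFourier.integrable_cexp_neg_mul_sq_norm_add (b := (b:ℂ))
    (by simpa using hb) 0 (0 : EuclideanSpace ℝ (Fin d))).norm
  refine h.congr (Filter.Eventually.of_forall fun v => ?_)
  simp [Complex.norm_exp]
  left
  norm_cast


lemma exp_half_sq_S16 (t : ℝ) : Real.exp t = Real.exp (t/2)^2 := by
  rw [sq, ← Real.exp_add]; congr 1; ring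

lemma le_exp_half_S16 {x : ℝ} (hx : 0 ≤ x) : x ≤ Real.exp (x/2) := by
  have h4 : 1 + x/4 ≤ Real.exp (x/4) := by linarith [Real.add_one_le_exp (x/4)]
  have hsq : (1 + x/4)^2 ≤ Real.exp (x/4)^2 := by gcongr
  have he : Real.exp (x/4)^2 = Real.exp (x/2) := by
    rw [sq, ← Real.exp_add]; congr 1; ring
  nlinarith [sq_nonneg (1 - x/4)]

variable {d : ℕ} {ε : ℝ}

lemma int1_S16 (d : ℕ) (hε : 0 < ε) :
    Integrable (fun z : EuclideanSpace ℝ (Fin d) =>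
      (Real.exp (‖z‖^2/2) - ε) * Real.exp (‖z‖^2/2) / (ε + Real.exp (‖z‖^2/2))^3) := by
  refine (integrable_gauss_S16 d (b := 1/2) (by norm_num)).mono'
    (Continuous.aestronglyMeasurable (by fun_prop (disch := intros; positivity)))
    (Filter.Eventually.of_forall fun z => ?_)
  set x := Real.exp (‖z‖^2/2) with hx
  have hxpos : 0 < x := Real.exp_pos _
  have hA : 0 < ε + x := by positivity
  have hxA : x ≤ ε + x := by linarith
  have hnum : |(x - ε) * x| ≤ (ε + x) * x := by
    rw [abs_mul, abs_of_nonneg hxpos.le]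
    have : |x - ε| ≤ ε + x := abs_le.mpr ⟨by linarith, by linarith⟩
    exact mul_le_mul_of_nonneg_right this hxpos.le
  have hrhs : Real.exp (-(1/2) * ‖z‖^2) = x⁻¹ := by
    rw [hx, ← Real.exp_neg]; ring_nf
  rw [Real.norm_eq_abs, abs_div, abs_of_nonneg (by positivity : (0:ℝ) ≤ (ε+x)^3), hrhs,
    div_le_iff₀ (by positivity)]
  calc |(x - ε) * x| ≤ (ε + x) * x := hnum
    _ ≤ x⁻¹ * (ε+x)^3 := by
        rw [inv_mul_eq_div, le_div_iff₀ hxpos]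
        nlinarith [mul_nonneg (mul_nonneg hA.le hε.le) hε.le,
          mul_nonneg (mul_nonneg hA.le hε.le) hxpos.le]

lemma int3_S16 (d : ℕ) (hε : 0 < ε) :
    Integrable (fun z : EuclideanSpace ℝ (Fin d) => hfS16 ε (‖z‖^2/2)) := by
  refine (integrable_gauss_S16 d (b := 1) (by norm_num)).mono'
    ((continuous_hfS16 hε).comp (by fun_prop) |>.aestronglyMeasurable)
    (Filter.Eventually.of_forall fun z => ?_)
  have hb := hfS16_abs_le hε (‖z‖^2/2)
  rw [show -(2*(‖z‖^2/2)) = -1*‖z‖^2 by ring] at hb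
  simpa using hb

lemma int2_S16 (d : ℕ) (hε : 0 < ε) :
    Integrable (fun z : EuclideanSpace ℝ (Fin d) =>
      ‖z‖^2 * Real.exp (‖z‖^2) / (ε + Real.exp (‖z‖^2/2))^4) := by
  refine (integrable_gauss_S16 d (b := 1/2) (by norm_num)).mono'
    (Continuous.aestronglyMeasurable (by fun_prop (disch := intros; positivity)))
    (Filter.Eventually.of_forall fun z => ?_)
  set x := Real.exp (‖z‖^2/2) with hx
  have hxpos : 0 < x := Real.exp_pos _
  have hA : 0 < ε + x := by positivity
  have hxA : x ≤ ε + x := by linarith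
  have hx4 : x^4 ≤ (ε + x)^4 := by gcongr
  have hex : Real.exp (‖z‖^2) = x^2 := exp_half_sq_S16 _
  have hz : ‖z‖^2 ≤ x := le_exp_half_S16 (by positivity)
  rw [Real.norm_eq_abs, abs_of_nonneg (by positivity), hex]
  have key : ‖z‖^2 * x^2 / (ε+x)^4 ≤ x * x^2 / x^4 := by
    apply div_le_div₀ (by positivity) (by nlinarith) (by positivity) hx4
  refine key.trans (le_of_eq ?_)
  rw [show -(1/2)*‖z‖^2 = -(‖z‖^2/2) by ring, Real.exp_neg, ← hx]
  field_simp

lemma radial_S16 (hd : 2 ≤ d) (hε : 0 < ε) :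
    ∫ z : EuclideanSpace ℝ (Fin d), ‖z‖^2 * Real.exp (‖z‖^2) / (ε + Real.exp (‖z‖^2/2))^4
      = -(d:ℝ) * ∫ z : EuclideanSpace ℝ (Fin d), hfS16 ε (‖z‖^2/2) := by
  haveI : Nontrivial (EuclideanSpace ℝ (Fin d)) :=
    Module.nontrivial_of_finrank_pos (R := ℝ) (by rw [finrank_euclideanSpace_fin]; omega)
  have hdim : Module.finrank ℝ (EuclideanSpace ℝ (Fin d)) = d := finrank_euclideanSpace_fin
  have h1 := MeasureTheory.integral_fun_norm_addHaar
    (volume : Measure (EuclideanSpace ℝ (Fin d))) (fun r => r^2 * hfS16' ε (r^2/2))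
  have h2 := MeasureTheory.integral_fun_norm_addHaar
    (volume : Measure (EuclideanSpace ℝ (Fin d))) (fun r => hfS16 ε (r^2/2))
  rw [hdim] at h1 h2
  have e1 : ∫ z : EuclideanSpace ℝ (Fin d), ‖z‖^2 * Real.exp (‖z‖^2) / (ε + Real.exp (‖z‖^2/2))^4
      = ∫ z : EuclideanSpace ℝ (Fin d), ‖z‖^2 * hfS16' ε (‖z‖^2/2) := by
    congr 1
    funext z
    unfold hfS16'
    rw [exp_half_sq_S16 (‖z‖^2)]
    ring
  have e2 : ∫ r in Ioi (0:ℝ), r ^ (d-1) • (r^2 * hfS16' ε (r^2/2))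
      = ∫ r in Ioi (0:ℝ), r^(d+1) * hfS16' ε (r^2/2) := by
    apply setIntegral_congr_fun measurableSet_Ioi
    intro r _
    show r ^ (d-1) • (r^2 * hfS16' ε (r^2/2)) = r^(d+1) * hfS16' ε (r^2/2)
    rw [smul_eq_mul, ← mul_assoc, ← pow_add]
    congr 2
    omega
  rw [e1, h1, e2, ibp_S16 hε hd, h2]
  simp only [smul_eq_mul, nsmul_eq_mul]
  ring


lemma I2_pos_S16 (hd : 2 ≤ d) (hε : 0 < ε) :
    0 < ∫ z : EuclideanSpace ℝ (Fin d),
        ‖z‖^2 * Real.exp (‖z‖^2) / (ε + Real.exp (‖z‖^2/2))^4 := by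
  haveI : Nontrivial (EuclideanSpace ℝ (Fin d)) :=
    Module.nontrivial_of_finrank_pos (R := ℝ) (by rw [finrank_euclideanSpace_fin]; omega)
  rw [integral_pos_iff_support_of_nonneg (fun z => by positivity) (int2_S16 d hε)]
  obtain ⟨x, hx⟩ := exists_ne (0 : EuclideanSpace ℝ (Fin d))
  refine lt_of_lt_of_le ((isOpen_compl_singleton).measure_pos volume ⟨x, hx⟩) ?_
  apply measure_mono
  intro z hz
  have hz0 : z ≠ 0 := hz
  have hn : 0 < ‖z‖ := norm_pos_iff.mpr hz0
  have : 0 < ‖z‖^2 * Real.exp (‖z‖^2) / (ε + Real.exp (‖z‖^2/2))^4 := by positivity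
  exact this.ne'

lemma C0_pos_S16 (hd : 2 ≤ d) (hε : 0 < ε) :
    0 < ∫ z : EuclideanSpace ℝ (Fin d),
        ((Real.exp (‖z‖^2/2) - ε) * Real.exp (‖z‖^2/2) / (ε + Real.exp (‖z‖^2/2))^3
          - ε * ((d:ℝ)+2) * hfS16 ε (‖z‖^2/2)) := by
  have hpt : ∀ z : EuclideanSpace ℝ (Fin d),
      0 < (Real.exp (‖z‖^2/2) - ε) * Real.exp (‖z‖^2/2) / (ε + Real.exp (‖z‖^2/2))^3
          - ε * ((d:ℝ)+2) * hfS16 ε (‖z‖^2/2) := by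
    intro z
    set x := Real.exp (‖z‖^2/2) with hx
    have hxpos : 0 < x := Real.exp_pos _
    have hA : 0 < ε + x := by positivity
    have hrepr : (x - ε) * x / (ε + x)^3 - ε * ((d:ℝ)+2) * hfS16 ε (‖z‖^2/2)
        = (x^2 + ε*x*((d:ℝ)/2) + ε^2*((d:ℝ)+2)/6) / (ε + x)^3 := by
      unfold hfS16
      rw [← hx]
      field_simp
      ring
    rw [hrepr]
    have hd0 : (0:ℝ) < (d:ℝ) := by exact_mod_cast (by omega : 0 < d)
    positivity
  have hint : Integrable (fun z : EuclideanSpace ℝ (Fin d) =>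
      (Real.exp (‖z‖^2/2) - ε) * Real.exp (‖z‖^2/2) / (ε + Real.exp (‖z‖^2/2))^3
        - ε * ((d:ℝ)+2) * hfS16 ε (‖z‖^2/2)) :=
    (int1_S16 d hε).sub ((int3_S16 d hε).const_mul _)
  rw [integral_pos_iff_support_of_nonneg (fun z => (hpt z).le) hint]
  have hsup : Function.support (fun z : EuclideanSpace ℝ (Fin d) =>
      (Real.exp (‖z‖^2/2) - ε) * Real.exp (‖z‖^2/2) / (ε + Real.exp (‖z‖^2/2))^3
        - ε * ((d:ℝ)+2) * hfS16 ε (‖z‖^2/2)) = Set.univ :=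
    Set.eq_univ_of_forall fun z => (hpt z).ne'
  rw [hsup]
  exact isOpen_univ.measure_pos volume Set.univ_nonempty

end AuxStmt16

theorem stmt_16 (d : ℕ) (hd : 2 ≤ d) (ε : ℝ) (hε : 0 < ε)
    (D1 : ℝ → ℝ)
    (hD1 : D1 = fun α =>
      α ^ (-(d:ℝ)/2) * (∫ z : EuclideanSpace ℝ (Fin d),
          (Real.exp (‖z‖^2/2) - ε) * Real.exp (‖z‖^2/2) / (ε + Real.exp (‖z‖^2/2))^3)
      + ε * α ^ (-(d:ℝ)/2) * (1 - α + 2/(d:ℝ)) * (∫ z : EuclideanSpace ℝ (Fin d),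
          ‖z‖^2 * Real.exp (‖z‖^2) / (ε + Real.exp (‖z‖^2/2))^4)) :
    (∃ C₀ C₁ : ℝ, 0 < C₀ ∧ 0 < C₁ ∧
      ∀ α : ℝ, 0 < α → D1 α = C₀ * α ^ (-(d:ℝ)/2) - C₁ * α ^ (1-(d:ℝ)/2)) ∧
    ∃ α₀ : ℝ, ∀ α : ℝ, α₀ ≤ α → D1 α < 0 := by
  have hd0 : (0:ℝ) < (d:ℝ) := by exact_mod_cast (by omega : 0 < d)
  set I₁ := ∫ z : EuclideanSpace ℝ (Fin d),
      (Real.exp (‖z‖^2/2) - ε) * Real.exp (‖z‖^2/2) / (ε + Real.exp (‖z‖^2/2))^3 with hI1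
  set I₂ := ∫ z : EuclideanSpace ℝ (Fin d),
      ‖z‖^2 * Real.exp (‖z‖^2) / (ε + Real.exp (‖z‖^2/2))^4 with hI2
  set H := ∫ z : EuclideanSpace ℝ (Fin d), hfS16 ε (‖z‖^2/2) with hH
  have hI2H : I₂ = -(d:ℝ) * H := radial_S16 hd hε
  have hC0eq : (∫ z : EuclideanSpace ℝ (Fin d),
      ((Real.exp (‖z‖^2/2) - ε) * Real.exp (‖z‖^2/2) / (ε + Real.exp (‖z‖^2/2))^3
        - ε * ((d:ℝ)+2) * hfS16 ε (‖z‖^2/2))) = I₁ - ε * ((d:ℝ)+2) * H := by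
    rw [hI1, hH, ← integral_const_mul, ← integral_sub (int1_S16 d hε)
      ((int3_S16 d hε).const_mul _)]
  set C₀ := I₁ + ε * (1 + 2/(d:ℝ)) * I₂ with hC0
  set C₁ := ε * I₂ with hC1
  have hI2pos : 0 < I₂ := I2_pos_S16 hd hε
  have hC1pos : 0 < C₁ := mul_pos hε hI2pos
  have hC0eq2 : C₀ = I₁ - ε * ((d:ℝ)+2) * H := by
    rw [hC0, hI2H]
    field_simp
    ring
  have hC0pos : 0 < C₀ := by
    have h := C0_pos_S16 hd hε
    rw [hC0eq] at h
    rw [hC0eq2]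
    exact h
  have hid : ∀ α : ℝ, 0 < α → D1 α = C₀ * α ^ (-(d:ℝ)/2) - C₁ * α ^ (1-(d:ℝ)/2) := by
    intro α hα
    simp only [hD1]
    rw [show (1-(d:ℝ)/2) = 1 + (-(d:ℝ)/2) by ring, Real.rpow_add hα, Real.rpow_one,
      hC0, hC1]
    ring
  refine ⟨⟨C₀, C₁, hC0pos, hC1pos, hid⟩, ⟨max 1 (C₀/C₁ + 1), fun α hα => ?_⟩⟩
  have hα1 : (1:ℝ) ≤ α := le_trans (le_max_left _ _) hα
  have hα0 : (0:ℝ) < α := lt_of_lt_of_le one_pos hα1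
  have hcc : C₀/C₁ + 1 ≤ α := le_trans (le_max_right _ _) hα
  have hC1α : C₀ + C₁ ≤ C₁ * α := by
    calc C₀ + C₁ = C₁ * (C₀/C₁ + 1) := by field_simp
      _ ≤ C₁ * α := mul_le_mul_of_nonneg_left hcc hC1pos.le
  rw [hid α hα0, show (1-(d:ℝ)/2) = 1 + (-(d:ℝ)/2) by ring, Real.rpow_add hα0,
    Real.rpow_one]
  have hp : 0 < α ^ (-(d:ℝ)/2) := Real.rpow_pos_of_pos hα0 _
  nlinarith [mul_le_mul_of_nonneg_right (show C₀ - C₁*α ≤ -C₁ by linarith) hp.le,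
    mul_pos hC1pos hp]
end
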